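/- arXiv:2502.17682 — 5 statements merged into one kernel-verified Lean document; each statement's English description precedes it below -/
import Mathlib

section
/- Every multidimensional replacement monotonic rule is non-bossy: if changing agent i's preference from R_i to R_i' does not change agent i's allotment, then it does not change anyone's allotment. -/
/-- Every multidimensional replacement monotonic rule is non-bossy. -/
theorem replacement_monotonic_implies_nonbossy
    {N L P : Type*} [DecidableEq N]
    (φ : (N → P) → N → L → ℝ)
    (hRM : ∀ (R : N → P) (i : N) (Ri' : P) (ℓ : L),
      (φ R i ℓ ≤ φ (Function.update R i Ri') i ℓ →
        ∀ j ≠ i, φ (Function.update R i Ri') j ℓ ≤ φ R j ℓ) ∧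
      (φ (Function.update R i Ri') i ℓ ≤ φ R i ℓ →
        ∀ j ≠ i, φ R j ℓ ≤ φ (Function.update R i Ri') j ℓ)) :
    ∀ (R : N → P) (i : N) (Ri' : P),
      φ R i = φ (Function.update R i Ri') i →
        φ R = φ (Function.update R i Ri') := by
  intro R i Ri' hi
  funext j ℓ
  by_cases hj : j = i
  · subst hj; rw [hi]
  · have h := hRM R i Ri' ℓ
    have heq : φ R i ℓ = φ (Function.update R i Ri') i ℓ := by rw [hi]
    exact le_antisymm (h.2 heq.ge j hj) (h.1 heq.le j hj)
end

section
/- For any three points x̂, x̄, x̃ in X = ∏_ℓ[0,Ω^ℓ] with x̄ not between x̂ and x̃, there exists a multidimensional single-peaked preference R with peak x̂ such that x̃ is strictly preferred to x̄ under R. -/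
open Finset

/-- Membership in the consumption set `X = ∏_ℓ [0, Ω^ℓ]`. -/
def InBox {L : Type*} (Ω : L → ℝ) (x : L → ℝ) : Prop :=
  ∀ ℓ, 0 ≤ x ℓ ∧ x ℓ ≤ Ω ℓ

/-- `b` is between `a` and `c`: coordinatewise `a^ℓ ≤ b^ℓ ≤ c^ℓ` or
`a^ℓ ≥ b^ℓ ≥ c^ℓ`. -/
def Between {L : Type*} (a b c : L → ℝ) : Prop :=
  ∀ ℓ, (a ℓ ≤ b ℓ ∧ b ℓ ≤ c ℓ) ∨ (c ℓ ≤ b ℓ ∧ b ℓ ≤ a ℓ)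

/-- A multidimensional single-peaked preference on the box `∏_ℓ [0, Ω^ℓ]`:
a complete and transitive relation with a peak `p` such that any bundle
strictly between the peak and another bundle is strictly preferred to it. -/
structure Pref (L : Type*) (Ω : L → ℝ) where
  rel : (L → ℝ) → (L → ℝ) → Prop
  total : ∀ x y, InBox Ω x → InBox Ω y → rel x y ∨ rel y x
  trans : ∀ x y z, rel x y → rel y z → rel x z
  peak : L → ℝ
  peak_mem : InBox Ω peak
  singlePeaked : ∀ x y, InBox Ω x → InBox Ω y → x ≠ y →
    Between peak x y → rel x y ∧ ¬ rel y x

lemma btw_refl {L : Type*} (p x : L → ℝ) : Between p x x := by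
  intro ℓ
  rcases le_total (p ℓ) (x ℓ) with h | h
  · exact Or.inl ⟨h, le_refl _⟩
  · exact Or.inr ⟨le_refl _, h⟩

lemma btw_trans {L : Type*} {p a b c : L → ℝ}
    (h1 : Between p b a) (h2 : Between p c b) : Between p c a := by
  intro ℓ
  rcases h1 ℓ with ⟨hb1, hb2⟩ | ⟨hb1, hb2⟩ <;> rcases h2 ℓ with ⟨hc1, hc2⟩ | ⟨hc1, hc2⟩ <;>
    first
      | exact Or.inl ⟨by linarith, by linarith⟩
      | exact Or.inr ⟨by linarith, by linarith⟩

lemma btw_antisymm {L : Type*} {p x y : L → ℝ}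
    (h1 : Between p y x) (h2 : Between p x y) : x = y := by
  funext ℓ
  rcases h1 ℓ with ⟨ha, hb⟩ | ⟨ha, hb⟩ <;> rcases h2 ℓ with ⟨hc, hd⟩ | ⟨hc, hd⟩ <;> linarith

/-- `x` is strictly dominated by `y` relative to peak `p`. -/
def Dom {L : Type*} (p x y : L → ℝ) : Prop :=
  Between p y x ∧ y ≠ x

/-- Reflexive closure of `Dom`. -/
def Dom' {L : Type*} (p x y : L → ℝ) : Prop :=
  x = y ∨ Dom p x y

/-- Base relation: dominance plus the forced pair `x̄ ≺ x̃`. -/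
def BaseW {L : Type*} (p xb xt x y : L → ℝ) : Prop :=
  Dom p x y ∨ (x = xb ∧ y = xt)

lemma dom_trans {L : Type*} {p a b c : L → ℝ}
    (h1 : Dom p a b) (h2 : Dom p b c) : Dom p a c := by
  refine ⟨btw_trans h1.1 h2.1, ?_⟩
  rintro rfl
  exact h1.2 (btw_antisymm h2.1 h1.1)

lemma dom'_trans {L : Type*} {p a b c : L → ℝ}
    (h1 : Dom' p a b) (h2 : Dom' p b c) : Dom' p a c := by
  rcases h1 with rfl | h1
  · exact h2
  · rcases h2 with rfl | h2
    · exact Or.inr h1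
    · exact Or.inr (dom_trans h1 h2)

/-- Amorós' lemma: if `x̄` is not between `x̂` and `x̃`, there is a
multidimensional single-peaked preference with peak `x̂` under which `x̃`
is strictly preferred to `x̄`. -/
theorem exists_single_peaked_pref {L : Type*} (Ω : L → ℝ)
    (xh xb xt : L → ℝ)
    (h1 : InBox Ω xh) (h2 : InBox Ω xb) (h3 : InBox Ω xt)
    (hnb : ¬ Between xh xb xt) :
    ∃ R : Pref L Ω, R.peak = xh ∧ R.rel xt xb ∧ ¬ R.rel xb xt := by
  classical
  have hne : xb ≠ xt := by rintro rfl; exact hnb (btw_refl _ _)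
  have hnd : ¬ Dom' xh xt xb := by
    rintro (h | h)
    · exact hne h.symm
    · exact hnb h.1
  have key : ∀ {x y : L → ℝ}, Relation.TransGen (BaseW xh xb xt) x y →
      Dom xh x y ∨ (Dom' xh x xb ∧ Dom' xh xt y) := by
    intro x y h
    induction h with
    | single h =>
      rcases h with h | ⟨rfl, rfl⟩
      · exact Or.inl h
      · exact Or.inr ⟨Or.inl rfl, Or.inl rfl⟩
    | tail h1 h2 ih =>
      rcases h2 with h2 | ⟨rfl, rfl⟩
      · rcases ih with ih | ⟨ih1, ih2⟩
        · exact Or.inl (dom_trans ih h2)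
        · exact Or.inr ⟨ih1, dom'_trans ih2 (Or.inr h2)⟩
      · rcases ih with ih | ⟨ih1, ih2⟩
        · exact Or.inr ⟨Or.inr ih, Or.inl rfl⟩
        · exact absurd ih2 hnd
  have hirr : ∀ x : L → ℝ, ¬ Relation.TransGen (BaseW xh xb xt) x x := by
    intro x h
    rcases key h with h | ⟨ha, hb⟩
    · exact h.2 rfl
    · exact hnd (dom'_trans hb ha)
  haveI hq : IsPartialOrder (L → ℝ) (Relation.ReflTransGen (BaseW xh xb xt)) :=
    { refl := fun _ => Relation.ReflTransGen.refl
      trans := fun _ _ _ => Relation.ReflTransGen.trans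
      antisymm := by
        intro a b hab hba
        rcases Relation.reflTransGen_iff_eq_or_transGen.mp hab with h | h
        · exact h.symm
        rcases Relation.reflTransGen_iff_eq_or_transGen.mp hba with h' | h'
        · exact h'
        exact absurd (h.trans h') (hirr a) }
  obtain ⟨s, hlin, hsub⟩ := extend_partialOrder (Relation.ReflTransGen (BaseW xh xb xt))
  haveI := hlin
  have hss : ∀ {x y : L → ℝ}, BaseW xh xb xt x y → s x y := fun h =>
    hsub _ _ (Relation.ReflTransGen.single h)
  refine ⟨{ rel := fun x y => s y x
            total := fun x y _ _ => total_of s y x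
            trans := fun x y z hxy hyz => trans_of s hyz hxy
            peak := xh
            peak_mem := h1
            singlePeaked := ?_ }, rfl, ?_, ?_⟩
  · intro x y _ _ hxy hbet
    have hs : s y x := hss (Or.inl ⟨hbet, hxy⟩)
    refine ⟨hs, fun hyx => hxy (antisymm_of s hyx hs)⟩
  · exact hss (Or.inr ⟨rfl, rfl⟩)
  · intro h
    exact hne (antisymm_of s (hss (Or.inr ⟨rfl, rfl⟩)) h)
end

section
/- For strategy-proof own-peak-only rules φ and ψ whose option sets are boxes (products of closed intervals), φ dominates ψ if and only if for each agent i and each subprofile R_{-i}, the option set of ψ is contained in the option set of φ: O_i^ψ(R_{-i}) ⊆ O_i^φ(R_{-i}). -/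
open Finset

/-- The option set of agent `i` left open by `R_{-i}` under `φ`. -/
def OptionSet {N L : Type*} [DecidableEq N] {Ω : L → ℝ}
    (φ : (N → Pref L Ω) → N → L → ℝ) (R : N → Pref L Ω) (i : N) :
    Set (L → ℝ) :=
  {x | ∃ Ri : Pref L Ω, φ (Function.update R i Ri) i = x}

/-- Strategy-proofness. -/
def StrategyProof {N L : Type*} [DecidableEq N] {Ω : L → ℝ}
    (φ : (N → Pref L Ω) → N → L → ℝ) : Prop :=
  ∀ (R : N → Pref L Ω) (i : N) (Ri' : Pref L Ω),
    (R i).rel (φ R i) (φ (Function.update R i Ri') i)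

/-- Own-peak-onliness. -/
def OwnPeakOnly {N L : Type*} [DecidableEq N] {Ω : L → ℝ}
    (φ : (N → Pref L Ω) → N → L → ℝ) : Prop :=
  ∀ (R : N → Pref L Ω) (i : N) (Ri' : Pref L Ω),
    Ri'.peak = (R i).peak → φ R i = φ (Function.update R i Ri') i

/-- A set is a nonempty box: a product of closed intervals. -/
def IsBox {L : Type*} (S : Set (L → ℝ)) : Prop :=
  ∃ a b : L → ℝ, (∀ ℓ, a ℓ ≤ b ℓ) ∧
    S = {x | ∀ ℓ, a ℓ ≤ x ℓ ∧ x ℓ ≤ b ℓ}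

/-- Domination between rules. -/
def Dominates {N L : Type*} {Ω : L → ℝ}
    (φ ψ : (N → Pref L Ω) → N → L → ℝ) : Prop :=
  ∀ (R : N → Pref L Ω) (i : N), (R i).rel (φ R i) (ψ R i)

/-! A strategy-proof rule gives an agent whose peak `q` lies in her option set exactly `q`: she
could obtain `q` by misreporting, and single-peakedness makes every other bundle strictly worse
than `q`. So if `φ` dominates `ψ` and `q` is in the option set of `ψ`, reporting a preference peaked
at `q` makes `ψ` assign `q`, and `φ` must assign a bundle at least as good as `q`, i.e. `q` itself;
hence `q` is in the option set of `φ`. Conversely, if `ψ R i` is in the option set of `φ`,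
strategy-proofness of `φ` says that `φ R i` is at least as good as `ψ R i`. -/

lemma between_self_left {L : Type*} (p z : L → ℝ) : Between p p z := fun ℓ =>
  (le_total (p ℓ) (z ℓ)).imp (fun h => ⟨le_rfl, h⟩) (fun h => ⟨h, le_rfl⟩)

lemma Between.isPartialOrder {L : Type*} (p : L → ℝ) : IsPartialOrder (L → ℝ) (Between p) where
  refl x ℓ := (le_total (p ℓ) (x ℓ)).imp (fun h => ⟨h, le_rfl⟩) (fun h => ⟨le_rfl, h⟩)
  trans x y z hxy hyz ℓ := by
    rcases hxy ℓ with ⟨h1, h2⟩ | ⟨h1, h2⟩ <;> rcases hyz ℓ with ⟨h3, h4⟩ | ⟨h3, h4⟩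
    · exact Or.inl ⟨h1, h2.trans h4⟩
    · exact Or.inr ⟨by linarith, by linarith⟩
    · exact Or.inl ⟨by linarith, by linarith⟩
    · exact Or.inr ⟨h3.trans h1, h2⟩
  antisymm x y hxy hyx := funext fun ℓ => by
    rcases hxy ℓ with ⟨h1, h2⟩ | ⟨h1, h2⟩ <;> rcases hyx ℓ with ⟨h3, h4⟩ | ⟨h3, h4⟩ <;> linarith

/-- `Pref.rel` is not required to vanish outside the box; this preference, a linear extension of
`Between p` restricted to the box, is what forces the outputs of strategy-proof rules into it. -/
lemma Pref.exists_peak_eq_rel_inBox {L : Type*} (Ω : L → ℝ) {p : L → ℝ} (hp : InBox Ω p) :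
    ∃ P : Pref L Ω, P.peak = p ∧ ∀ x y, P.rel x y → InBox Ω x ∧ InBox Ω y := by
  have := Between.isPartialOrder p
  obtain ⟨s, hlin, hsub⟩ := extend_partialOrder (Between p)
  refine ⟨{
    rel := fun x y => InBox Ω x ∧ InBox Ω y ∧ s x y
    total := fun x y hx hy => (hlin.toTotal.total x y).imp (⟨hx, hy, ·⟩) (⟨hy, hx, ·⟩)
    trans := fun x y z ⟨hx, _, hxy⟩ ⟨_, hz, hyz⟩ =>
      ⟨hx, hz, hlin.toIsPartialOrder.toIsPreorder.toIsTrans.trans x y z hxy hyz⟩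
    peak := p
    peak_mem := hp
    singlePeaked := fun x y hx hy hne hbtw =>
      ⟨⟨hx, hy, hsub x y hbtw⟩, fun ⟨_, _, hyx⟩ =>
        hne (hlin.toIsPartialOrder.toAntisymm.antisymm x y (hsub x y hbtw) hyx)⟩
  }, rfl, fun _ _ h => ⟨h.1, h.2.1⟩⟩

lemma Pref.eq_peak_of_rel_peak {L : Type*} {Ω : L → ℝ} (P : Pref L Ω) {y : L → ℝ}
    (hy : InBox Ω y) (h : P.rel y P.peak) : y = P.peak := by
  by_contra hne
  exact (P.singlePeaked _ y P.peak_mem hy (Ne.symm hne) (between_self_left _ _)).2 h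

section StrategyProof

variable {N L : Type*} [DecidableEq N] {Ω : L → ℝ} {χ : (N → Pref L Ω) → N → L → ℝ}

lemma StrategyProof.inBox (hSP : StrategyProof χ) (R : N → Pref L Ω) (j : N) :
    InBox Ω (χ R j) := by
  obtain ⟨P, -, hP⟩ := Pref.exists_peak_eq_rel_inBox Ω (R j).peak_mem
  have h := hSP (Function.update R j P) j (R j)
  rw [Function.update_self, Function.update_idem, Function.update_eq_self] at h
  exact (hP _ _ h).2

lemma StrategyProof.apply_update_eq_of_mem_optionSet (hSP : StrategyProof χ)
    {R : N → Pref L Ω} {i : N} {q : L → ℝ} (hq : q ∈ OptionSet χ R i)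
    (P : Pref L Ω) (hP : P.peak = q) : χ (Function.update R i P) i = q := by
  obtain ⟨Q, rfl⟩ := hq
  have h := hSP (Function.update R i P) i Q
  rw [Function.update_idem, Function.update_self] at h
  rw [← hP] at h ⊢
  exact P.eq_peak_of_rel_peak (hSP.inBox _ _) h

end StrategyProof

section Dominates

variable {N L : Type*} [DecidableEq N] {Ω : L → ℝ} {φ ψ : (N → Pref L Ω) → N → L → ℝ}

lemma Dominates.optionSet_subset (hSPφ : StrategyProof φ) (hSPψ : StrategyProof ψ)
    (h : Dominates φ ψ) (R : N → Pref L Ω) (i : N) : OptionSet ψ R i ⊆ OptionSet φ R i := by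
  intro q hq
  have hqX : InBox Ω q := by
    obtain ⟨Q, rfl⟩ := hq
    exact hSPψ.inBox _ i
  obtain ⟨P, hP, -⟩ := Pref.exists_peak_eq_rel_inBox Ω hqX
  have hψ := hSPψ.apply_update_eq_of_mem_optionSet hq P hP
  have hφ := h (Function.update R i P) i
  rw [Function.update_self, hψ, ← hP] at hφ
  exact ⟨P, hP ▸ P.eq_peak_of_rel_peak (hSPφ.inBox _ _) hφ⟩

lemma Dominates.of_optionSet_subset (hSPφ : StrategyProof φ)
    (h : ∀ (R : N → Pref L Ω) (i : N), OptionSet ψ R i ⊆ OptionSet φ R i) : Dominates φ ψ := by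
  intro R i
  obtain ⟨P, hP⟩ := h R i ⟨R i, by rw [Function.update_eq_self]⟩
  exact hP ▸ hSPφ R i P

end Dominates

theorem dominates_iff_option_subset_general {N L : Type*} [DecidableEq N] (Ω : L → ℝ)
    (φ ψ : (N → Pref L Ω) → N → L → ℝ)
    (hSPφ : StrategyProof φ)
    (hSPψ : StrategyProof ψ) :
    Dominates φ ψ ↔
      ∀ (R : N → Pref L Ω) (i : N),
        OptionSet ψ R i ⊆ OptionSet φ R i :=
  ⟨fun h => h.optionSet_subset hSPφ hSPψ, Dominates.of_optionSet_subset hSPφ⟩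

/-- For strategy-proof, own-peak-only rules with box option sets, `φ`
dominates `ψ` iff every option set of `ψ` is contained in the corresponding
option set of `φ`. -/
theorem dominates_iff_option_subset {N L : Type*} [DecidableEq N] (Ω : L → ℝ)
    (φ ψ : (N → Pref L Ω) → N → L → ℝ)
    (hSPφ : StrategyProof φ) (hOPOφ : OwnPeakOnly φ)
    (hSPψ : StrategyProof ψ) (hOPOψ : OwnPeakOnly ψ)
    (hboxφ : ∀ (R : N → Pref L Ω) (i : N), IsBox (OptionSet φ R i))
    (hboxψ : ∀ (R : N → Pref L Ω) (i : N), IsBox (OptionSet ψ R i))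
    (hrich : ∀ x : L → ℝ, InBox Ω x → ∃ Ri : Pref L Ω, Ri.peak = x) :
    Dominates φ ψ ↔
      ∀ (R : N → Pref L Ω) (i : N),
        OptionSet ψ R i ⊆ OptionSet φ R i :=
  dominates_iff_option_subset_general Ω φ ψ hSPφ hSPψ
end

section
/- Let φ be a one-dimensional strategy-proof and same-sided rule. For each profile R, agent i, and preference R_i': (i) if p(R_i) < φ_i(R) and p(R_i') ≤ φ_i(R) then φ_i(R_i',R_{-i}) = φ_i(R); (ii) if p(R_i) > φ_i(R) and p(R_i') ≥ φ_i(R) then φ_i(R_i',R_{-i}) = φ_i(R). (Uncompromisingness of strategy-proof same-sided rules.) -/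
open Finset

/-- A one-dimensional single-peaked preference on `[0, Ω]`. -/
structure Pref1 (Ω : ℝ) where
  rel : ℝ → ℝ → Prop
  total : ∀ x y, x ∈ Set.Icc 0 Ω → y ∈ Set.Icc 0 Ω → rel x y ∨ rel y x
  trans : ∀ x y z, rel x y → rel y z → rel x z
  peak : ℝ
  peak_mem : peak ∈ Set.Icc 0 Ω
  singlePeaked : ∀ x y, x ∈ Set.Icc 0 Ω → y ∈ Set.Icc 0 Ω →
    ((peak ≤ x ∧ x < y) ∨ (y < x ∧ x ≤ peak)) → rel x y ∧ ¬ rel y x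

/-- piecewise linear single-peaked utility -/
noncomputable def wedge (p A B t : ℝ) : ℝ := if t ≤ p then (t - p) * A else (p - t) * B

lemma wedge_lt (p A B : ℝ) (hA : 0 < A) (hB : 0 < B) {x y : ℝ}
    (h : (p ≤ x ∧ x < y) ∨ (y < x ∧ x ≤ p)) : wedge p A B y < wedge p A B x := by
  unfold wedge
  rcases h with ⟨h1, h2⟩ | ⟨h1, h2⟩ <;> split_ifs <;> nlinarith

/-- A single-peaked preference with peak `p` induced by the wedge utility. -/
noncomputable def wedgePref (Ω p A B : ℝ) (hp : p ∈ Set.Icc 0 Ω) (hA : 0 < A) (hB : 0 < B) :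
    Pref1 Ω where
  rel a b := wedge p A B b ≤ wedge p A B a
  total x y _ _ := le_total _ _
  trans x y z h1 h2 := le_trans h2 h1
  peak := p
  peak_mem := hp
  singlePeaked x y _ _ h :=
    ⟨(wedge_lt p A B hA hB h).le, not_le.2 (wedge_lt p A B hA hB h)⟩

@[simp] lemma wedgePref_peak (Ω p A B : ℝ) (hp : p ∈ Set.Icc 0 Ω) (hA : 0 < A) (hB : 0 < B) :
    (wedgePref Ω p A B hp hA hB).peak = p := rfl

lemma wedgePref_rel (Ω p A B : ℝ) (hp : p ∈ Set.Icc 0 Ω) (hA : 0 < A) (hB : 0 < B) (a b : ℝ) :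
    (wedgePref Ω p A B hp hA hB).rel a b ↔ wedge p A B b ≤ wedge p A B a := Iff.rfl

section

variable {N : Type*} [Fintype N] [DecidableEq N]

/-- Own-peak-only: strategy-proof same-sided rules depend only on the reported peak. -/
lemma peak_only
    (Ω : ℝ)
    (φ : (N → Pref1 Ω) → N → ℝ)
    (hfeas : ∀ R : N → Pref1 Ω,
      (∀ i, φ R i ∈ Set.Icc 0 Ω) ∧ ∑ i, φ R i = Ω)
    (hSP : ∀ (R : N → Pref1 Ω) (i : N) (Ri' : Pref1 Ω),
      (R i).rel (φ R i) (φ (Function.update R i Ri') i))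
    (hSS : ∀ R : N → Pref1 Ω,
      ((Ω ≤ ∑ i, (R i).peak) → ∀ i, φ R i ≤ (R i).peak) ∧
      ((∑ i, (R i).peak ≤ Ω) → ∀ i, (R i).peak ≤ φ R i))
    (R : N → Pref1 Ω) (i : N) (S : Pref1 Ω) (hpk : S.peak = (R i).peak) :
    φ (Function.update R i S) i = φ R i := by
  set RS := Function.update R i S with hRS
  set x := φ R i with hx
  set y := φ RS i with hy
  have hxm : x ∈ Set.Icc 0 Ω := (hfeas R).1 i
  have hym : y ∈ Set.Icc 0 Ω := (hfeas RS).1 i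
  have h1 : (R i).rel x y := hSP R i S
  have h2 : S.rel y x := by
    have := hSP RS i (R i)
    have hb : Function.update RS i (R i) = R := by
      rw [hRS, Function.update_idem, Function.update_eq_self]
    rw [hb] at this
    have hSi : RS i = S := Function.update_self i S R
    rwa [hSi] at this
  have hsum : ∑ j, (RS j).peak = ∑ j, (R j).peak := by
    apply Finset.sum_congr rfl
    intro j _
    rcases eq_or_ne j i with rfl | hne
    · rw [hRS, Function.update_self, hpk]
    · rw [hRS, Function.update_of_ne hne]
  set p := (R i).peak with hp
  rcases lt_trichotomy y x with h | h | h
  · -- y < x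
    rcases le_or_gt p y with hpy | hyp
    · -- p ≤ y < x : contradicts h1 via R i
      exact absurd h1 ((R i).singlePeaked y x hym hxm (Or.inl ⟨hpy, h⟩)).2
    · rcases le_or_gt x p with hxp | hpx
      · -- y < x ≤ p : contradicts h2 via S
        exact absurd h2 ((S).singlePeaked x y hxm hym (Or.inr ⟨h, by rw [hpk]; exact hxp⟩)).2
      · -- y < p < x : same-sidedness
        exfalso
        have hnot : ¬ (∑ j, (RS j).peak ≤ Ω) := by
          intro hle
          have := (hSS RS).2 hle i
          simp only [hRS, Function.update_self, hpk] at this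
          exact absurd this (not_le.2 hyp)
        have hge : Ω ≤ ∑ j, (R j).peak := by
          rw [hsum] at hnot; exact (not_le.1 hnot).le
        exact absurd ((hSS R).1 hge i) (not_le.2 hpx)
  · exact h
  · -- x < y
    rcases le_or_gt p x with hpx | hxp
    · -- p ≤ x < y : contradicts h2 via S
      exact absurd h2 ((S).singlePeaked x y hxm hym (Or.inl ⟨by rw [hpk]; exact hpx, h⟩)).2
    · rcases le_or_gt y p with hyp | hpy
      · -- x < y ≤ p : contradicts h1 via R i
        exact absurd h1 ((R i).singlePeaked y x hym hxm (Or.inr ⟨h, hyp⟩)).2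
      · -- x < p < y : same-sidedness
        exfalso
        have hnot : ¬ (Ω ≤ ∑ j, (RS j).peak) := by
          intro hle
          have := (hSS RS).1 hle i
          simp only [hRS, Function.update_self, hpk] at this
          exact absurd this (not_le.2 hpy)
        have hle : ∑ j, (R j).peak ≤ Ω := by
          rw [hsum] at hnot; exact (not_le.1 hnot).le
        exact absurd ((hSS R).2 hle i) (not_le.2 hxp)

end

/-- Uncompromisingness of one-dimensional strategy-proof, same-sided rules. -/
theorem uncompromisingness {N : Type*} [Fintype N] [DecidableEq N]
    (Ω : ℝ) (hΩ : 0 ≤ Ω)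
    (φ : (N → Pref1 Ω) → N → ℝ)
    (hfeas : ∀ R : N → Pref1 Ω,
      (∀ i, φ R i ∈ Set.Icc 0 Ω) ∧ ∑ i, φ R i = Ω)
    (hSP : ∀ (R : N → Pref1 Ω) (i : N) (Ri' : Pref1 Ω),
      (R i).rel (φ R i) (φ (Function.update R i Ri') i))
    (hSS : ∀ R : N → Pref1 Ω,
      ((Ω ≤ ∑ i, (R i).peak) → ∀ i, φ R i ≤ (R i).peak) ∧
      ((∑ i, (R i).peak ≤ Ω) → ∀ i, (R i).peak ≤ φ R i))
    (hrich : ∀ x ∈ Set.Icc (0:ℝ) Ω, ∃ Ri : Pref1 Ω, Ri.peak = x) :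
    ∀ (R : N → Pref1 Ω) (i : N) (Ri' : Pref1 Ω),
      (((R i).peak < φ R i → Ri'.peak ≤ φ R i →
        φ (Function.update R i Ri') i = φ R i) ∧
       (φ R i < (R i).peak → φ R i ≤ Ri'.peak →
        φ (Function.update R i Ri') i = φ R i)) := by
  intro R i Ri'
  set R' := Function.update R i Ri' with hR'
  set x := φ R i with hx
  set x' := φ R' i with hx'
  have hxm : x ∈ Set.Icc 0 Ω := (hfeas R).1 i
  have hx'm : x' ∈ Set.Icc 0 Ω := (hfeas R').1 i
  have hpm : (R i).peak ∈ Set.Icc 0 Ω := (R i).peak_mem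
  -- SP in the reverse direction: Ri' weakly prefers x' to x
  have hback : Ri'.rel x' x := by
    have := hSP R' i (R i)
    have hb : Function.update R' i (R i) = R := by
      rw [hR', Function.update_idem, Function.update_eq_self]
    rw [hb] at this
    have h1 : R' i = Ri' := Function.update_self i Ri' R
    rwa [h1] at this
  constructor
  · -- case (i): peak (R i) < x, peak Ri' ≤ x
    intro hp hp'
    rcases lt_trichotomy x' x with h | h | h
    · exfalso
      rcases le_or_gt (R i).peak x' with hle | hlt
      · -- peak ≤ x' < x : contradicts SP of R i
        have h1 : (R i).rel x x' := hSP R i Ri'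
        exact absurd h1 ((R i).singlePeaked x' x hx'm hxm (Or.inl ⟨hle, h⟩)).2
      · -- x' < peak < x : use a wedge preference with peak (R i).peak
        set p := (R i).peak with hpdef
        have hA : (0:ℝ) < x - p := by linarith
        have hB : (0:ℝ) < x - x' := by linarith
        set S := wedgePref Ω p (x - p) (x - x') hpm hA hB with hS
        have hSx : φ (Function.update R i S) i = x :=
          peak_only Ω φ hfeas hSP hSS R i S rfl
        have hspS := hSP (Function.update R i S) i Ri'
        rw [Function.update_idem, ← hR', ← hx', hSx, Function.update_self] at hspS
        -- hspS : S.rel x x', i.e. wedge p _ _ x' ≤ wedge p _ _ x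
        have hw : wedge p (x - p) (x - x') x' ≤ wedge p (x - p) (x - x') x := hspS
        unfold wedge at hw
        rw [if_pos hlt.le, if_neg (not_le.2 hp)] at hw
        nlinarith
    · exact h
    · -- x < x' : contradicts Ri' (peak ≤ x < x')
      exact absurd hback ((Ri').singlePeaked x x' hxm hx'm (Or.inl ⟨hp', h⟩)).2
  · -- case (ii): x < peak (R i), x ≤ peak Ri'
    intro hp hp'
    rcases lt_trichotomy x' x with h | h | h
    · -- x' < x ≤ peak Ri' : contradicts Ri'
      exact absurd hback ((Ri').singlePeaked x x' hxm hx'm (Or.inr ⟨h, hp'⟩)).2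
    · exact h
    · exfalso
      rcases le_or_gt x' (R i).peak with hle | hlt
      · -- x < x' ≤ peak : contradicts SP of R i
        have h1 : (R i).rel x x' := hSP R i Ri'
        exact absurd h1 ((R i).singlePeaked x' x hx'm hxm (Or.inr ⟨h, hle⟩)).2
      · -- x < peak < x' : wedge preference
        set p := (R i).peak with hpdef
        have hA : (0:ℝ) < x' - x := by linarith
        have hB : (0:ℝ) < p - x := by linarith
        set S := wedgePref Ω p (x' - x) (p - x) hpm hA hB with hS
        have hSx : φ (Function.update R i S) i = x :=
          peak_only Ω φ hfeas hSP hSS R i S rfl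
        have hspS := hSP (Function.update R i S) i Ri'
        rw [Function.update_idem, ← hR', ← hx', hSx, Function.update_self] at hspS
        have hw : wedge p (x' - x) (p - x) x' ≤ wedge p (x' - x) (p - x) x := hspS
        unfold wedge at hw
        rw [if_pos hp.le, if_neg (not_le.2 hlt)] at hw
        nlinarith
end

section
/- Every multidimensional sequential rule—i.e., a rule obtained by applying, independently for each commodity ℓ, a one-dimensional strategy-proof, same-sided, replacement-monotonic (peaks-only) rule φ^ℓ to the profile of ℓ-th peak coordinates—is strategy-proof on the domain of multidimensional single-peaked preferences. -/
open Finset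

/-- Piecewise-linear utility with peak `p`, left slope `c`, right slope `d`. -/
noncomputable def pkU (p c d t : ℝ) : ℝ := if t ≤ p then c * (t - p) else d * (p - t)

lemma pkU_lt (p c d : ℝ) (hc : 0 < c) (hd : 0 < d) {a b : ℝ}
    (h : (p ≤ a ∧ a < b) ∨ (b < a ∧ a ≤ p)) : pkU p c d b < pkU p c d a := by
  unfold pkU
  rcases h with ⟨hpa, hab⟩ | ⟨hba, hap⟩
  · have hbp : ¬ b ≤ p := by linarith
    rw [if_neg hbp]
    by_cases hap : a ≤ p
    · rw [if_pos hap]; nlinarith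
    · rw [if_neg hap]; nlinarith
  · rw [if_pos hap, if_pos (by linarith : b ≤ p)]; nlinarith

/-- A single-peaked one-dimensional preference from a piecewise-linear utility. -/
noncomputable def mkPref1 (Ω p c d : ℝ) (hp : p ∈ Set.Icc 0 Ω) (hc : 0 < c) (hd : 0 < d) :
    Pref1 Ω where
  rel a b := pkU p c d b ≤ pkU p c d a
  total := fun x y _ _ => le_total _ _
  trans := fun x y z h1 h2 => le_trans h2 h1
  peak := p
  peak_mem := hp
  singlePeaked := fun x y _ _ h => by
    have := pkU_lt p c d hc hd h
    exact ⟨this.le, not_le.2 this⟩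

lemma between_of_all_pkU (p x y : ℝ)
    (h : ∀ c d : ℝ, 0 < c → 0 < d → pkU p c d y ≤ pkU p c d x) :
    (p ≤ x ∧ x ≤ y) ∨ (y ≤ x ∧ x ≤ p) := by
  by_contra hcon
  push_neg at hcon
  obtain ⟨h1, h2⟩ := hcon
  rcases le_total p x with hpx | hxp
  · have hyx : y < x := h1 hpx
    have hpx' : p < x := h2 hyx.le
    rcases le_or_gt p y with hpy | hyp
    · have hh := h 1 1 one_pos one_pos
      have h3 : pkU p 1 1 x < pkU p 1 1 y := pkU_lt p 1 1 one_pos one_pos (Or.inl ⟨hpy, hyx⟩)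
      linarith
    · -- y < p < x : choose right slope large
      have hxp0 : (0:ℝ) < x - p := by linarith
      have hdpos : (0:ℝ) < (p - y) / (x - p) + 1 := by
        have := div_pos (by linarith : (0:ℝ) < p - y) hxp0
        linarith
      have hh := h 1 ((p - y) / (x - p) + 1) one_pos hdpos
      unfold pkU at hh
      rw [if_pos hyp.le, if_neg (not_le.2 hpx')] at hh
      have key : (p - y) / (x - p) * (x - p) = p - y := div_mul_cancel₀ _ (ne_of_gt hxp0)
      nlinarith [key, hh]
  · have hxy : x < y := by
      by_contra hxy
      exact absurd (h2 (not_lt.1 hxy)) (not_lt.2 hxp)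
    have hxp' : x < p := by
      rcases lt_or_ge x p with h' | h'
      · exact h'
      · exact absurd hxy (not_lt.2 (h1 h').le)
    rcases le_or_gt y p with hyp | hpy
    · have hh := h 1 1 one_pos one_pos
      have h3 : pkU p 1 1 x < pkU p 1 1 y := pkU_lt p 1 1 one_pos one_pos (Or.inr ⟨hxy, hyp⟩)
      linarith
    · -- x < p < y : choose left slope large
      have hpx0 : (0:ℝ) < p - x := by linarith
      have hcpos : (0:ℝ) < (y - p) / (p - x) + 1 := by
        have := div_pos (by linarith : (0:ℝ) < y - p) hpx0
        linarith
      have hh := h ((y - p) / (p - x) + 1) 1 hcpos one_pos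
      unfold pkU at hh
      rw [if_neg (not_le.2 hpy), if_pos hxp'.le] at hh
      have key : (y - p) / (p - x) * (p - x) = y - p := div_mul_cancel₀ _ (ne_of_gt hpx0)
      nlinarith [key, hh]

/-- Every multidimensional sequential rule—built by applying, good by good, a
one-dimensional strategy-proof, same-sided, replacement-monotonic peaks-only
rule to the profile of peak coordinates—is strategy-proof on the domain of
multidimensional single-peaked preferences. -/
theorem multidimensional_sequential_strategyproof
    {N L : Type*} [Fintype N] [DecidableEq N] (Ω : L → ℝ)
    (φℓ : L → (N → ℝ) → N → ℝ)
    -- each coordinate rule is feasible on peak profiles in the interval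
    (hfeas : ∀ (ℓ : L) (q : N → ℝ), (∀ j, q j ∈ Set.Icc 0 (Ω ℓ)) →
      (∀ i, φℓ ℓ q i ∈ Set.Icc 0 (Ω ℓ)) ∧ ∑ i, φℓ ℓ q i = Ω ℓ)
    -- each coordinate rule, viewed as a rule on one-dimensional single-peaked
    -- preferences, is strategy-proof
    (hSP1 : ∀ (ℓ : L) (R : N → Pref1 (Ω ℓ)) (i : N) (Ri' : Pref1 (Ω ℓ)),
      (R i).rel (φℓ ℓ (fun j => (R j).peak) i)
        (φℓ ℓ (Function.update (fun j => (R j).peak) i Ri'.peak) i))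
    -- each coordinate rule is same-sided
    (hSS : ∀ (ℓ : L) (q : N → ℝ), (∀ j, q j ∈ Set.Icc 0 (Ω ℓ)) →
      ((Ω ℓ ≤ ∑ j, q j) → ∀ i, φℓ ℓ q i ≤ q i) ∧
      ((∑ j, q j ≤ Ω ℓ) → ∀ i, q i ≤ φℓ ℓ q i))
    -- each coordinate rule is replacement monotonic
    (hRM : ∀ (ℓ : L) (q : N → ℝ) (i : N) (qi' : ℝ),
      (φℓ ℓ q i ≤ φℓ ℓ (Function.update q i qi') i →
        ∀ j ≠ i, φℓ ℓ (Function.update q i qi') j ≤ φℓ ℓ q j) ∧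
      (φℓ ℓ (Function.update q i qi') i ≤ φℓ ℓ q i →
        ∀ j ≠ i, φℓ ℓ q j ≤ φℓ ℓ (Function.update q i qi') j)) :
    -- the multidimensional sequential rule is strategy-proof
    ∀ (R : N → Pref L Ω) (i : N) (Ri' : Pref L Ω),
      (R i).rel
        (fun ℓ => φℓ ℓ (fun j => (R j).peak ℓ) i)
        (fun ℓ => φℓ ℓ (fun j => ((Function.update R i Ri') j).peak ℓ) i) := by
  intro R i Ri'
  classical
  set p : L → ℝ := (R i).peak with hp
  -- truthful and manipulated peak profiles per coordinate
  set q : L → N → ℝ := fun ℓ j => (R j).peak ℓ with hq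
  set q' : L → N → ℝ := fun ℓ => Function.update (q ℓ) i (Ri'.peak ℓ) with hq'
  have hqmem : ∀ ℓ j, q ℓ j ∈ Set.Icc 0 (Ω ℓ) := fun ℓ j => ⟨((R j).peak_mem ℓ).1, ((R j).peak_mem ℓ).2⟩
  have hq'mem : ∀ ℓ j, q' ℓ j ∈ Set.Icc 0 (Ω ℓ) := by
    intro ℓ j
    by_cases hji : j = i
    · subst hji; simp only [hq', Function.update_self]
      exact ⟨(Ri'.peak_mem ℓ).1, (Ri'.peak_mem ℓ).2⟩
    · simp only [hq', Function.update_of_ne hji]; exact hqmem ℓ j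
  have hprof : (fun ℓ => φℓ ℓ (fun j => ((Function.update R i Ri') j).peak ℓ) i)
      = fun ℓ => φℓ ℓ (q' ℓ) i := by
    funext ℓ
    congr 1
    funext j
    by_cases hji : j = i
    · subst hji; simp [hq', hq]
    · simp [hq', hq, Function.update_of_ne hji]
  rw [hprof]
  set x : L → ℝ := fun ℓ => φℓ ℓ (q ℓ) i with hx
  set y : L → ℝ := fun ℓ => φℓ ℓ (q' ℓ) i with hy
  have hxBox : InBox Ω x := fun ℓ => ⟨((hfeas ℓ (q ℓ) (hqmem ℓ)).1 i).1, ((hfeas ℓ (q ℓ) (hqmem ℓ)).1 i).2⟩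
  have hyBox : InBox Ω y := fun ℓ => ⟨((hfeas ℓ (q' ℓ) (hq'mem ℓ)).1 i).1, ((hfeas ℓ (q' ℓ) (hq'mem ℓ)).1 i).2⟩
  -- key: x is coordinatewise between the true peak and y
  have hbet : Between p x y := by
    intro ℓ
    apply between_of_all_pkU (p ℓ) (x ℓ) (y ℓ)
    intro c d hc hd
    have hpmem : p ℓ ∈ Set.Icc 0 (Ω ℓ) := ⟨((R i).peak_mem ℓ).1, ((R i).peak_mem ℓ).2⟩
    -- build a one-dimensional profile with the same peaks
    set Rprof : N → Pref1 (Ω ℓ) := fun j =>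
      if j = i then mkPref1 (Ω ℓ) (p ℓ) c d hpmem hc hd
      else mkPref1 (Ω ℓ) (q ℓ j) 1 1 (hqmem ℓ j) one_pos one_pos with hRprof
    set Ri1 : Pref1 (Ω ℓ) := mkPref1 (Ω ℓ) (Ri'.peak ℓ)
      1 1 ⟨(Ri'.peak_mem ℓ).1, (Ri'.peak_mem ℓ).2⟩ one_pos one_pos with hRi1
    have hpeaks : (fun j => (Rprof j).peak) = q ℓ := by
      funext j
      by_cases hji : j = i
      · subst hji; simp [hRprof, mkPref1, hq, hp]
      · simp [hRprof, hji, mkPref1]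
    have hsp := hSP1 ℓ Rprof i Ri1
    rw [hpeaks] at hsp
    have e : Function.update (q ℓ) i Ri1.peak = q' ℓ := rfl
    rw [e] at hsp
    simpa [hRprof, mkPref1, hx, hy] using hsp
  by_cases hxy : x = y
  · rw [← hxy]
    rcases (R i).total x x hxBox hxBox with h | h <;> exact h
  · exact ((R i).singlePeaked x y hxBox hyBox hxy hbet).1
end
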